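/- Strict decrease of the measure across a completed local diagram: for all words δ₀, γ₁, δ₁, γ₂ over P with γ₁ nonempty, if |γ₁δ₁| ≼′ |δ₀| + |γ₁|, then |δ₁| + |γ₂| ≺′ |δ₀| + |γ₁γ₂|, where juxtaposition of words denotes concatenation. -/

import Mathlib

/-- The measure of a word over `P` with respect to a strict order `lt` on `P`,
valued in finitely supported multisets `P →₀ ℕ`: `|ε| = 0` and
`|I σ| = δ_I + |σ^(I)|`, where `σ^(I)` is `σ` with every letter `lt`-below `I`
removed. -/
noncomputable def wordMeas {P : Type*} (lt : P → P → Prop) : List P → (P →₀ ℕ)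
  | [] => 0
  | I :: σ =>
      Finsupp.single I 1 +
        wordMeas lt (σ.filter fun J => @decide (¬ lt J I) (Classical.propDecidable _))
termination_by l => l.length
decreasing_by
  simp only [List.length_cons]
  first
  | exact Nat.lt_succ_of_le (List.length_filter_le _ _)
  | exact Nat.lt_succ_of_le (by simpa using List.length_filter_le _ σ.attach)
  | (simp only [List.length_unattach]; exact Nat.lt_succ_of_le ((List.length_filter_le _ _).trans (le_of_eq List.length_attach)))

/-- The Dershowitz–Manna-style strict order on finitely supported multisets
`P →₀ ℕ` induced by a strict order `lt` on `P`. -/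
def DMLt {P : Type*} (lt : P → P → Prop) (M N : P →₀ ℕ) : Prop :=
  ∃ X Y Z : P →₀ ℕ, M = Z + X ∧ N = Z + Y ∧ Y ≠ 0 ∧
    ∀ I : P, X I ≠ 0 → ∃ J : P, Y J ≠ 0 ∧ lt I J

/-- The reflexive closure `≼′` of the Dershowitz–Manna-style order. -/
def DMLe {P : Type*} (lt : P → P → Prop) (M N : P →₀ ℕ) : Prop :=
  DMLt lt M N ∨ M = N

/-!
Write `|γ₁γ₂| = |γ₁| + |γ₂|^{(γ₁)}`. What `γ₁` cuts off from `|δ₁| + |γ₂|` lies below the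
nonempty support of `|γ₁|`, so `|δ₁| + |γ₂| ≺′ |γ₁| + (|δ₁| + |γ₂|)^{(γ₁)} = |γ₁δ₁| + |γ₂|^{(γ₁)}`.
Adding `|γ₂|^{(γ₁)}` to both sides of the hypothesis gives
`|γ₁δ₁| + |γ₂|^{(γ₁)} ≼′ |δ₀| + |γ₁γ₂|`, and `≺′` is transitive.
-/

open scoped Classical

section DershowitzManna

variable {P : Type*} {lt : P → P → Prop} {M N O : P →₀ ℕ}

theorem DMLt.add_right (h : DMLt lt M N) (C : P →₀ ℕ) : DMLt lt (M + C) (N + C) := by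
  obtain ⟨X, Y, Z, rfl, rfl, hY, hXY⟩ := h
  exact ⟨X, Y, Z + C, add_right_comm _ _ _, add_right_comm _ _ _, hY, hXY⟩

theorem DMLe.add_right (h : DMLe lt M N) (C : P →₀ ℕ) : DMLe lt (M + C) (N + C) :=
  h.imp (DMLt.add_right · C) (congrArg (· + C))

theorem DMLt.trans (htrans : ∀ p q r : P, lt p q → lt q r → lt p r)
    (h₁ : DMLt lt M N) (h₂ : DMLt lt N O) : DMLt lt M O := by
  obtain ⟨X₁, Y₁, Z₁, rfl, hN, -, hXY₁⟩ := h₁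
  obtain ⟨X₂, Y₂, Z₂, hN', rfl, hY₂, hXY₂⟩ := h₂
  have hN : ∀ K, Z₁ K + Y₁ K = Z₂ K + X₂ K := fun K => by
    simpa using DFunLike.congr_fun (hN.symm.trans hN') K
  -- new common part `Z₁ ⊓ Z₂`; the surpluses of `Z₁` and `Z₂` over it join `X₁` and `Y₂`
  set Z := Z₁ ⊓ Z₂
  have hZ : ∀ K, Z K = min (Z₁ K) (Z₂ K) := Finsupp.inf_apply Z₁ Z₂
  have hdom₂ : ∀ J, X₂ J ≠ 0 → ∃ K, (Z₂ - Z + Y₂) K ≠ 0 ∧ lt J K := fun J hJ => by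
    obtain ⟨K, hK, hJK⟩ := hXY₂ J hJ
    exact ⟨K, by simp only [Finsupp.add_apply]; omega, hJK⟩
  refine ⟨Z₁ - Z + X₁, Z₂ - Z + Y₂, Z, ?_, ?_, ?_, fun I hI => ?_⟩
  · ext K; simp only [Finsupp.add_apply, Finsupp.tsub_apply]; grind
  · ext K; simp only [Finsupp.add_apply, Finsupp.tsub_apply]; grind
  · intro h0
    exact hY₂ (le_zero_iff.mp (h0 ▸ le_add_self))
  · simp only [Finsupp.add_apply, Finsupp.tsub_apply] at hI
    by_cases hX₁ : X₁ I = 0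
    · exact hdom₂ I (by grind)
    obtain ⟨J, hJ, hIJ⟩ := hXY₁ I hX₁
    by_cases hZJ : (Z₂ - Z) J = 0
    · obtain ⟨K, hK, hJK⟩ := hdom₂ J (by simp only [Finsupp.tsub_apply] at hZJ; grind)
      exact ⟨K, hK, htrans _ _ _ hIJ hJK⟩
    · exact ⟨J, by simp only [Finsupp.add_apply]; omega, hIJ⟩

theorem DMLt.trans_dmLe (htrans : ∀ p q r : P, lt p q → lt q r → lt p r)
    (h₁ : DMLt lt M N) (h₂ : DMLe lt N O) : DMLt lt M O :=
  h₂.elim (h₁.trans htrans) (· ▸ h₁)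

end DershowitzManna

section WordMeasure

variable {P : Type*} {lt : P → P → Prop}

variable (lt) in
/-- `σ^{(I)}`, with the decidability instance used in `wordMeas`. -/
noncomputable def dropBelow (I : P) (σ : List P) : List P :=
  σ.filter fun J => @decide (¬ lt J I) (Classical.propDecidable _)

variable (lt) in
/-- `ν^{(μ)}`; the paper's `ν^{(σ)}` is `cutBelow lt (wordMeas lt σ) ν`. -/
noncomputable def cutBelow (μ ν : P →₀ ℕ) : P →₀ ℕ :=
  ν.filter fun K => ∀ I, μ I ≠ 0 → ¬ lt K I

theorem wordMeas_cons (I : P) (σ : List P) :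
    wordMeas lt (I :: σ) = Finsupp.single I 1 + wordMeas lt (dropBelow lt I σ) :=
  wordMeas.eq_2 lt I σ

theorem wordMeas_induction {motive : List P → Prop} (nil : motive [])
    (cons : ∀ I σ, motive (dropBelow lt I σ) → motive (I :: σ)) (σ : List P) : motive σ := by
  induction σ using wordMeas.induct lt with
  | case1 => exact nil
  | case2 I σ ih =>
    rw [List.unattach_filter (g := fun J => @decide (¬ lt J I) (Classical.propDecidable _))
      (hf := fun _ _ => rfl), List.unattach_attach] at ih
    exact cons I σ ih

theorem dropBelow_cons (I J : P) (τ : List P) :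
    dropBelow lt I (J :: τ) = if lt J I then dropBelow lt I τ else J :: dropBelow lt I τ := by
  by_cases h : lt J I <;> simp [dropBelow, h]

theorem dropBelow_comm (I J : P) (τ : List P) :
    dropBelow lt I (dropBelow lt J τ) = dropBelow lt J (dropBelow lt I τ) := by
  simp only [dropBelow, List.filter_filter, Bool.and_comm]

theorem dropBelow_dropBelow_of_lt (htrans : ∀ p q r : P, lt p q → lt q r → lt p r) {I J : P}
    (h : lt J I) (τ : List P) : dropBelow lt I (dropBelow lt J τ) = dropBelow lt I τ := by
  simp only [dropBelow, List.filter_filter]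
  refine List.filter_congr fun K _ => ?_
  by_cases hKJ : lt K J
  · simp [hKJ, htrans K J I hKJ h]
  · simp [hKJ]

variable (lt) in
theorem wordMeas_ne_zero {σ : List P} (hσ : σ ≠ []) : wordMeas lt σ ≠ 0 := by
  obtain ⟨I, σ, rfl⟩ := List.exists_cons_of_ne_nil hσ
  rw [wordMeas_cons]
  exact fun h => by simpa using DFunLike.congr_fun h I

theorem cutBelow_apply (μ ν : P →₀ ℕ) (K : P) :
    cutBelow lt μ ν K = if ∀ I, μ I ≠ 0 → ¬ lt K I then ν K else 0 :=
  Finsupp.filter_apply _ _ _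

theorem cutBelow_add (μ ν ν' : P →₀ ℕ) :
    cutBelow lt μ (ν + ν') = cutBelow lt μ ν + cutBelow lt μ ν' :=
  Finsupp.filter_add

theorem cutBelow_le (μ ν : P →₀ ℕ) : cutBelow lt μ ν ≤ ν := fun K => by
  rw [cutBelow_apply]; split_ifs <;> simp

theorem cutBelow_single_apply (I : P) (ν : P →₀ ℕ) (K : P) :
    cutBelow lt (Finsupp.single I 1) ν K = if lt K I then 0 else ν K := by
  simp [cutBelow_apply, Finsupp.single_apply, ite_not]

theorem cutBelow_single_single (I J : P) :
    cutBelow lt (Finsupp.single I 1) (Finsupp.single J 1) =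
      if lt J I then 0 else Finsupp.single J 1 := by
  ext K
  rw [cutBelow_single_apply]
  by_cases hKJ : K = J <;> split_ifs <;> simp_all

-- with `α = δ_I` and `μ = |σ|` this reads `(ν^{(σ)})^{(I)} = ν^{(Iσ)}`
theorem cutBelow_cutBelow (htrans : ∀ p q r : P, lt p q → lt q r → lt p r) (α μ ν : P →₀ ℕ) :
    cutBelow lt α (cutBelow lt μ ν) = cutBelow lt (α + cutBelow lt α μ) ν := by
  ext K
  simp only [cutBelow_apply, Finsupp.add_apply]
  have key : ((∀ I, α I ≠ 0 → ¬ lt K I) ∧ ∀ I, μ I ≠ 0 → ¬ lt K I) ↔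
      ∀ I, α I + (if ∀ J, α J ≠ 0 → ¬ lt I J then μ I else 0) ≠ 0 → ¬ lt K I := by
    refine ⟨fun ⟨hα, hμ⟩ I hI => ?_, fun h => ⟨fun I hI => h I (by omega), fun I hI hKI => ?_⟩⟩
    · by_cases hαI : α I = 0
      · exact hμ I (by simp_all)
      · exact hα I hαI
    · by_cases hI' : ∀ J, α J ≠ 0 → ¬ lt I J
      · exact h I (by rw [if_pos hI']; omega) hKI
      · push Not at hI'
        obtain ⟨J, hJ, hIJ⟩ := hI'
        exact h J (by omega) (htrans _ _ _ hKI hIJ)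
  rw [← key]
  split_ifs <;> tauto

theorem dmLt_add_cutBelow {μ : P →₀ ℕ} (hμ : μ ≠ 0) (ν : P →₀ ℕ) :
    DMLt lt ν (μ + cutBelow lt μ ν) := by
  refine ⟨ν - cutBelow lt μ ν, μ, cutBelow lt μ ν,
    (add_tsub_cancel_of_le (cutBelow_le μ ν)).symm, add_comm _ _, hμ, fun K hK => ?_⟩
  rw [Finsupp.tsub_apply, cutBelow_apply] at hK
  by_contra! h
  simp_all

theorem wordMeas_dropBelow (htrans : ∀ p q r : P, lt p q → lt q r → lt p r) (I : P)
    (τ : List P) :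
    wordMeas lt (dropBelow lt I τ) = cutBelow lt (Finsupp.single I 1) (wordMeas lt τ) := by
  induction τ using wordMeas_induction generalizing I with
  | nil => simp [dropBelow, wordMeas, cutBelow, Finsupp.filter_zero]
  | cons J τ ih =>
    rw [dropBelow_cons, wordMeas_cons, cutBelow_add, cutBelow_single_single, ← ih]
    split_ifs with hJI
    · rw [zero_add, dropBelow_dropBelow_of_lt htrans hJI]
    · rw [wordMeas_cons, dropBelow_comm]

theorem wordMeas_append (htrans : ∀ p q r : P, lt p q → lt q r → lt p r) (σ τ : List P) :
    wordMeas lt (σ ++ τ) = wordMeas lt σ + cutBelow lt (wordMeas lt σ) (wordMeas lt τ) := by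
  induction σ with
  | nil => simp [wordMeas, cutBelow, (Finsupp.filter_eq_self_iff _ _).2]
  | cons I σ ih =>
    rw [List.cons_append, wordMeas_cons, wordMeas_cons, wordMeas_dropBelow htrans,
      wordMeas_dropBelow htrans, ih, cutBelow_add, cutBelow_cutBelow htrans, add_assoc]

end WordMeasure

theorem wordMeas_strict_decrease_general {P : Type*} (lt : P → P → Prop)
    (htrans : ∀ p q r : P, lt p q → lt q r → lt p r)
    (δ₀ γ₁ δ₁ γ₂ : List P) (hγ₁ : γ₁ ≠ [])
    (h : DMLe lt (wordMeas lt (γ₁ ++ δ₁)) (wordMeas lt δ₀ + wordMeas lt γ₁)) :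
    DMLt lt (wordMeas lt δ₁ + wordMeas lt γ₂)
      (wordMeas lt δ₀ + wordMeas lt (γ₁ ++ γ₂)) := by
  have hlt : DMLt lt (wordMeas lt δ₁ + wordMeas lt γ₂)
      (wordMeas lt γ₁ + cutBelow lt (wordMeas lt γ₁) (wordMeas lt δ₁ + wordMeas lt γ₂)) :=
    dmLt_add_cutBelow (wordMeas_ne_zero lt hγ₁) _
  have hle : DMLe lt
      (wordMeas lt γ₁ + cutBelow lt (wordMeas lt γ₁) (wordMeas lt δ₁ + wordMeas lt γ₂))
      (wordMeas lt δ₀ + wordMeas lt (γ₁ ++ γ₂)) := by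
    rw [cutBelow_add, ← add_assoc, ← wordMeas_append htrans, wordMeas_append htrans γ₁ γ₂,
      ← add_assoc]
    exact h.add_right _
  exact hlt.trans_dmLe htrans hle

/-- Strict decrease of the measure across a completed local diagram: if `γ₁` is
nonempty and `|γ₁ δ₁| ≼′ |δ₀| + |γ₁|`, then `|δ₁| + |γ₂| ≺′ |δ₀| + |γ₁ γ₂|`. -/
theorem wordMeas_strict_decrease {P : Type*} (lt : P → P → Prop)
    (hirr : ∀ p : P, ¬ lt p p)
    (htrans : ∀ p q r : P, lt p q → lt q r → lt p r)
    (hwf : WellFounded lt)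
    (δ₀ γ₁ δ₁ γ₂ : List P) (hγ₁ : γ₁ ≠ [])
    (h : DMLe lt (wordMeas lt (γ₁ ++ δ₁)) (wordMeas lt δ₀ + wordMeas lt γ₁)) :
    DMLt lt (wordMeas lt δ₁ + wordMeas lt γ₂)
      (wordMeas lt δ₀ + wordMeas lt (γ₁ ++ γ₂)) :=
  wordMeas_strict_decrease_general lt htrans δ₀ γ₁ δ₁ γ₂ hγ₁ h
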